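/- arXiv:2309.05921 — 5 statements merged into one kernel-verified Lean document; each statement's English description precedes it below -/
import Mathlib

section
/- Let A ⊆ B be rings with A semilocal (A/rad A semisimple) and B finitely generated as a left A-module. Let 𝔞 be a two-sided ideal of A contained in rad A with B𝔞 ⊆ 𝔞B. Then 𝔞 ⊆ rad B. -/
/-- A ring `A` is *semilocal* if `A / rad A` is semisimple, where `rad A` is the
Jacobson radical (the intersection of the maximal left ideals, `(⊥ : Ideal A).jacobson`).
Equivalently, `A / rad A` is semisimple as a left `A`-module. -/
def IsSemilocalRing (A : Type*) [Ring A] : Prop :=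
  IsSemisimpleModule A (A ⧸ (⊥ : Ideal A).jacobson)

/-- The right multiples `𝔞B` of a two-sided ideal `𝔞` of a subring `A ⊆ B`,
as an additive subgroup of `B`. -/
def idealRightMultiples {B : Type*} [Ring B] (A : Subring B) (a : Ideal A) : AddSubgroup B :=
  AddSubgroup.closure {z : B | ∃ x ∈ a, ∃ b : B, z = (x : B) * b}

/-!
If `x ∈ 𝔞` lay outside a maximal left ideal `m` of `B`, then `y x + i = 1` for some `y ∈ B` and
`i ∈ m`, so every `b = b y x + b i` lies in `𝔞B + m ⊆ (rad A) B + m`, because `B𝔞 ⊆ 𝔞B`.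
As `B` is a finitely generated `A`-module, Nakayama's lemma over the noncommutative ring `A`
then gives `m = B`.
-/

theorem Submodule.eq_top_of_sup_jacobson_smul_top_eq_top {R M : Type*} [Ring R] [AddCommGroup M]
    [Module R M] [Module.Finite R M] {N : Submodule R M}
    (h : N ⊔ Ring.jacobson R • ⊤ = ⊤) : N = ⊤ := by
  have hQ : (⊤ : Submodule R (M ⧸ N)) = ⊥ := by
    refine Module.Finite.fg_top.eq_bot_of_le_jacobson_smul ?_
    calc (⊤ : Submodule R (M ⧸ N)) = (Ring.jacobson R • ⊤ : Submodule R M).map N.mkQ :=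
          ((map_mkQ_eq_top _ _).2 h).symm
      _ = Ring.jacobson R • (⊤ : Submodule R M).map N.mkQ := map_smul'' _ _ _
      _ ≤ Ring.jacobson R • ⊤ := smul_mono_right _ le_top
  rw [← Submodule.Quotient.subsingleton_iff, ← Submodule.subsingleton_iff R,
    ← subsingleton_iff_bot_eq_top]
  exact hQ.symm

section

variable {R B : Type*} [Ring R] [Ring B] [Module R B] [IsScalarTower R B B] [Module.Finite R B]

theorem mem_jacobson_of_forall_mul_mem_jacobson_smul_top {x : B}
    (hx : ∀ b : B, b * x ∈ Ring.jacobson R • (⊤ : Submodule R B)) : x ∈ Ring.jacobson B := by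
  rw [Ring.jacobson_eq_sInf_isMaximal]
  refine Submodule.mem_sInf.2 fun m hm => ?_
  by_contra hxm
  obtain ⟨y, i, hi, hyi⟩ := hm.exists_inv hxm
  have hsup : m.restrictScalars R ⊔ Ring.jacobson R • ⊤ = ⊤ := by
    refine eq_top_iff.2 fun b _ =>
      Submodule.mem_sup.2 ⟨b * i, Ideal.mul_mem_left m b hi, b * y * x, hx _, ?_⟩
    rw [mul_assoc, ← mul_add, add_comm, hyi, mul_one]
  exact hm.ne_top (Submodule.restrictScalars_eq_top_iff R B _ |>.1
    (Submodule.eq_top_of_sup_jacobson_smul_top_eq_top hsup))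

end

theorem idealRightMultiples_le_smul_top {B : Type*} [Ring B] (A : Subring B) (a : Ideal A) :
    idealRightMultiples A a ≤ (a • (⊤ : Submodule A B)).toAddSubgroup := by
  rw [idealRightMultiples, AddSubgroup.closure_le]
  rintro _ ⟨x, hx, b, rfl⟩
  exact Submodule.smul_mem_smul hx Submodule.mem_top

theorem subset_jacobson_of_semilocal_general
    (B : Type*) [Ring B] (A : Subring B)
    [Module.Finite A B]
    (a : Ideal A)
    (ha_rad : a ≤ (⊥ : Ideal A).jacobson)
    (hBa : ∀ (b : B), ∀ x ∈ a, b * (x : B) ∈ idealRightMultiples A a) :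
    ∀ x ∈ a, (x : B) ∈ (⊥ : Ideal B).jacobson := by
  rw [Ideal.jacobson_bot] at ha_rad ⊢
  intro x hx
  refine mem_jacobson_of_forall_mul_mem_jacobson_smul_top (R := A) fun b => ?_
  exact Submodule.smul_mono_left ha_rad (idealRightMultiples_le_smul_top A a (hBa b x hx))

/-- Let `A ⊆ B` be rings with `A` semilocal and `B` finitely generated as a left
`A`-module.  Let `𝔞` be a two-sided ideal of `A` contained in `rad A` with
`B𝔞 ⊆ 𝔞B`.  Then `𝔞 ⊆ rad B`. -/
theorem subset_jacobson_of_semilocal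
    (B : Type*) [Ring B] (A : Subring B)
    (hA : IsSemilocalRing A) [Module.Finite A B]
    (a : Ideal A)
    (ha_rad : a ≤ (⊥ : Ideal A).jacobson)
    (ha_twosided : ∀ x ∈ a, ∀ r : A, x * r ∈ a)
    (hBa : ∀ (b : B), ∀ x ∈ a, b * (x : B) ∈ idealRightMultiples A a) :
    ∀ x ∈ a, (x : B) ∈ (⊥ : Ideal B).jacobson :=
  subset_jacobson_of_semilocal_general B A a ha_rad hBa
end

section
/- Let A ⊆ B be rings with A semilocal, B finitely generated as a left A-module, and 𝔞 ⊆ rad A a two-sided ideal of A with B𝔞 ⊆ 𝔞B. Then B is semilocal. -/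
open LinearMap Submodule

/-- Noncommutative Nakayama: in a f.g. module, `rad R • ⊤` is superfluous. -/
theorem nak {R M : Type*} [Ring R] [AddCommGroup M] [Module R M] [Module.Finite R M]
    (p : Submodule R M) (h : p ⊔ ((⊥ : Ideal R).jacobson • (⊤ : Submodule R M)) = ⊤) :
    p = ⊤ := by
  by_contra hp
  have hco : IsCoatomic (Submodule R M) :=
    CompleteLattice.coatomic_of_top_compact
      ((Submodule.fg_iff_compact _).mp (Module.finite_def.mp ‹_›))
  obtain ⟨q, hq, hpq⟩ := (eq_top_or_exists_le_coatom p).resolve_left hp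
  haveI hsm : IsSimpleModule R (M ⧸ q) := (isSimpleModule_iff_isCoatom).mpr hq
  have hJ : ((⊥ : Ideal R).jacobson • (⊤ : Submodule R M)) ≤ q := by
    rw [Submodule.smul_le]
    intro r hr x _
    by_cases hx : x ∈ q
    · exact q.smul_mem r hx
    · have hx0 : (Submodule.Quotient.mk x : M ⧸ q) ≠ 0 := by
        simpa [Submodule.Quotient.mk_eq_zero] using hx
      have hmax := IsSimpleModule.ker_toSpanSingleton_isMaximal R
        (m := (Submodule.Quotient.mk x : M ⧸ q)) hx0
      have hle : (⊥ : Ideal R).jacobson ≤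
          LinearMap.ker (LinearMap.toSpanSingleton R (M ⧸ q) (Submodule.Quotient.mk x)) := by
        rw [Ideal.jacobson]
        exact sInf_le ⟨bot_le, hmax⟩
      have h2 := hle hr
      rw [LinearMap.mem_ker, LinearMap.toSpanSingleton_apply, ← Submodule.Quotient.mk_smul,
        Submodule.Quotient.mk_eq_zero] at h2
      exact h2
  exact hq.1 (top_le_iff.mp (h ▸ sup_le hpq hJ))

theorem key {R B : Type*} [Ring R] [Ring B] [Module R B] [IsScalarTower R B B]
    [Module.Finite R B] (hR : IsSemisimpleModule R (R ⧸ (⊥ : Ideal R).jacobson)) :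
    IsSemisimpleModule B (B ⧸ (⊥ : Ideal B).jacobson) := by
  haveI := hR
  set J : Ideal R := (⊥ : Ideal R).jacobson with hJdef
  set JB : Submodule R B := J • ⊤ with hJBdef
  -- Step 1: B ⧸ JB is a semisimple R-module
  haveI hssV : IsSemisimpleModule R (B ⧸ JB) := by
    obtain ⟨s, hts⟩ := Module.finite_def.mp ‹Module.Finite R B›
    refine isSemisimpleModule_of_isSemisimpleModule_submodule
      (s := (JB.mkQ '' (s : Set B))) (p := fun v => Submodule.span R {v}) (fun v hv => ?_) ?_
    · -- span of a single vector killed by J is a quotient of R ⧸ J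
      have hker : J ≤ LinearMap.ker (LinearMap.toSpanSingleton R (B ⧸ JB) v) := by
        intro r hr
        obtain ⟨b, rfl⟩ := JB.mkQ_surjective v
        rw [LinearMap.mem_ker, LinearMap.toSpanSingleton_apply]
        have : JB.mkQ (r • b) = r • JB.mkQ b := map_smul _ _ _
        rw [← this, Submodule.mkQ_apply, Submodule.Quotient.mk_eq_zero]
        exact Submodule.smul_mem_smul hr trivial
      have hrange : Submodule.span R {v} =
          LinearMap.range (J.liftQ (LinearMap.toSpanSingleton R (B ⧸ JB) v) hker) := by
        rw [Submodule.range_liftQ, LinearMap.span_singleton_eq_range]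
      show IsSemisimpleModule R (Submodule.span R {v})
      rw [hrange]
      exact IsSemisimpleModule.range _
    · rw [← Submodule.span_eq_iSup_of_singleton_spans, Submodule.span_image, hts,
        Submodule.map_top, Submodule.range_mkQ]
  haveI : IsArtinian R (B ⧸ JB) := inferInstance
  -- Step 2: finitely many maximal left ideals intersect in rad B
  let g : Ideal B → Submodule R (B ⧸ JB) := fun N => (N.restrictScalars R).map JB.mkQ
  have hkey : ∀ (N m : Ideal B), m.IsMaximal → ¬ N ≤ m → g (N ⊓ m) < g N := by
    intro N m hm hNm
    refine lt_of_le_of_ne (Submodule.map_mono (fun x hx => hx.1)) ?_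
    intro heq
    -- from the equality, N ⊆ (N ⊓ m) + JB
    have hsub : (N.restrictScalars R) ≤ ((N ⊓ m).restrictScalars R) ⊔ JB := by
      intro x hx
      have hmem : JB.mkQ x ∈ g (N ⊓ m) := heq ▸ ⟨x, hx, rfl⟩
      obtain ⟨y, hy, hxy⟩ := hmem
      have hd : x - y ∈ JB := by
        rw [← Submodule.Quotient.eq JB]
        exact (hxy).symm
      have hxe : x = y + (x - y) := by abel
      rw [hxe]
      exact Submodule.add_mem_sup hy hd
    -- N ⊄ m and m maximal give m ⊔ N = ⊤
    have htop : m ⊔ N = ⊤ := (Ideal.isMaximal_def.mp hm).2 _ (left_lt_sup.mpr hNm)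
    obtain ⟨u, hu, w, hw, huw⟩ := Submodule.mem_sup.mp
      (htop ▸ (Submodule.mem_top : (1 : B) ∈ ⊤))
    -- hence m + JB = B, contradicting Nakayama
    have htop2 : (m.restrictScalars R) ⊔ JB = ⊤ := by
      rw [eq_top_iff]
      intro b _
      have hb : b = b * u + b * w := by rw [← mul_add, huw, mul_one]
      have hbw : b * w ∈ ((N ⊓ m).restrictScalars R) ⊔ JB := hsub (N.mul_mem_left b hw)
      have hmono : ((N ⊓ m).restrictScalars R) ⊔ JB ≤ (m.restrictScalars R) ⊔ JB :=
        sup_le_sup_right (fun x hx => hx.2) _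
      rw [hb]
      exact Submodule.add_mem _ (Submodule.mem_sup_left (m.mul_mem_left b hu)) (hmono hbw)
    have hmtop := nak (m.restrictScalars R) htop2
    exact hm.ne_top ((Ideal.eq_top_iff_one m).mpr
      (by rw [show ((1:B) ∈ m) = ((1:B) ∈ m.restrictScalars R) from rfl, hmtop]; trivial))
  classical
  -- the set of finite intersections of maximal left ideals
  have hex : ∃ (sF : Finset (Ideal B)), (∀ m ∈ sF, m.IsMaximal) ∧
      ((⊥ : Ideal B).jacobson = sF.inf _root_.id) := by
    obtain ⟨gv, hgv, hmin⟩ := IsArtinian.set_has_minimal (R := R) (M := B ⧸ JB)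
      (g '' {N : Ideal B | ∃ sF : Finset (Ideal B), (∀ m ∈ sF, m.IsMaximal) ∧ N = sF.inf _root_.id})
      ⟨g ⊤, ⟨⊤, ⟨∅, by simp, by simp⟩, rfl⟩⟩
    obtain ⟨N₀, hN₀, rfl⟩ := hgv
    obtain ⟨sF, hsF, hN₀eq⟩ := hN₀
    subst hN₀eq
    refine ⟨sF, hsF, le_antisymm ?_ ?_⟩
    · -- rad B ≤ each maximal ideal in sF
      refine Finset.le_inf fun m hm => ?_
      rw [Ideal.jacobson]
      exact sInf_le ⟨bot_le, hsF m hm⟩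
    · -- the intersection is contained in every maximal left ideal, by minimality
      rw [Ideal.jacobson]
      refine le_sInf ?_
      rintro m ⟨-, hmax⟩
      by_contra hnot
      refine hmin (g (sF.inf _root_.id ⊓ m)) ⟨sF.inf _root_.id ⊓ m, ⟨insert m sF, ?_, ?_⟩, rfl⟩
        (hkey _ m hmax hnot)
      · intro k hk
        rcases Finset.mem_insert.mp hk with rfl | hk
        · exact hmax
        · exact hsF k hk
      · rw [Finset.inf_insert, inf_comm]
        rfl
  -- Step 3: B ⧸ rad B embeds in a finite product of simple modules
  obtain ⟨sF, hsF, hjac⟩ := hex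
  let f : B →ₗ[B] (∀ m : sF, B ⧸ (m : Ideal B)) := LinearMap.pi fun m => (m : Ideal B).mkQ
  have hker : LinearMap.ker f = (⊥ : Ideal B).jacobson := by
    rw [hjac, LinearMap.ker_pi]
    simp only [Submodule.ker_mkQ]
    exact le_antisymm (Finset.le_inf fun a ha => iInf_le _ (⟨a, ha⟩ : {x // x ∈ sF}))
      (le_iInf fun m => Finset.inf_le m.2)
  haveI hsimple : ∀ m : sF, IsSimpleModule B (B ⧸ (m : Ideal B)) := fun m =>
    isSimpleModule_iff_isCoatom.mpr (Ideal.isMaximal_def.mp (hsF m m.2))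
  haveI : IsSemisimpleModule B (∀ m : sF, B ⧸ (m : Ideal B)) := by
    refine isSemisimpleModule_of_isSemisimpleModule_submodule'
      (p := fun m => LinearMap.range (LinearMap.single B (fun m : sF => B ⧸ (m : Ideal B)) m))
      (fun m => IsSemisimpleModule.range _) ?_
    simp_rw [LinearMap.range_eq_map, Submodule.iSup_map_single, Submodule.pi_top]
  let e : (B ⧸ (⊥ : Ideal B).jacobson) ≃ₗ[B] LinearMap.range f :=
    (Submodule.quotEquivOfEq _ _ hker.symm).trans (LinearMap.quotKerEquivRange f)
  haveI hr : IsSemisimpleModule B (LinearMap.range f) := inferInstance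
  exact IsSemisimpleModule.congr (N := B ⧸ (⊥ : Ideal B).jacobson) (M := LinearMap.range f) e



/-- Let `A ⊆ B` be rings with `A` semilocal and `B` finitely generated as a left
`A`-module, and `𝔞 ⊆ rad A` a two-sided ideal of `A` with `B𝔞 ⊆ 𝔞B`.
Then `B` is semilocal. -/
theorem isSemilocalRing_of_finite
    (B : Type*) [Ring B] (A : Subring B)
    (hA : IsSemilocalRing A) [Module.Finite A B]
    (a : Ideal A)
    (ha_rad : a ≤ (⊥ : Ideal A).jacobson)
    (ha_twosided : ∀ x ∈ a, ∀ r : A, x * r ∈ a)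
    (hBa : ∀ (b : B), ∀ x ∈ a, b * (x : B) ∈ idealRightMultiples A a) :
    IsSemilocalRing B := by
  exact key (R := A) (B := B) hA
end

section
/- Let A ⊆ B be rings with B finitely generated as a left A-module, and let 𝔞 ⊆ rad A be a two-sided ideal of A with B𝔞 ⊆ 𝔞B. Then 𝔞 annihilates every simple left B-module. -/
theorem Submodule.smul_top_lt_top_of_le_jacobson {R M : Type*} [Ring R] [AddCommGroup M]
    [Module R M] [Module.Finite R M] [Nontrivial M] {I : Ideal R} (hI : I ≤ Ring.jacobson R) :
    I • (⊤ : Submodule R M) < ⊤ :=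
  (Submodule.smul_mono_left hI).trans_lt (Submodule.jacobson_smul_lt_top ⊤)

section RightMultiples

variable {B : Type*} [Ring B] {A : Subring B} {a : Ideal A}
  {M : Type*} [AddCommGroup M] [Module B M]

theorem smul_mem_ideal_smul_top_of_mem_idealRightMultiples {z : B}
    (hz : z ∈ idealRightMultiples A a) (m : M) : z • m ∈ a • (⊤ : Submodule A M) := by
  induction hz using AddSubgroup.closure_induction generalizing m with
  | mem w hw =>
    obtain ⟨x, hx, b, rfl⟩ := hw
    rw [mul_smul]
    exact Submodule.smul_mem_smul hx Submodule.mem_top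
  | zero => simp
  | add w w' _ _ hw hw' => rw [add_smul]; exact add_mem (hw m) (hw' m)
  | neg w _ hw => rw [neg_smul]; exact neg_mem (hw m)

variable (a M) in
def idealSmulTopOfRightMultiples
    (hBa : ∀ (b : B), ∀ x ∈ a, b * (x : B) ∈ idealRightMultiples A a) : Submodule B M where
  carrier := ↑(a • (⊤ : Submodule A M))
  add_mem' := add_mem
  zero_mem' := zero_mem _
  smul_mem' b n (hn : n ∈ a • (⊤ : Submodule A M)) := by
    refine Submodule.smul_induction_on hn (fun x hx m _ ↦ ?_) fun _ _ hy hz ↦ ?_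
    · rw [Subring.smul_def, ← mul_smul]
      exact smul_mem_ideal_smul_top_of_mem_idealRightMultiples (hBa b x hx) m
    · rw [smul_add]
      exact add_mem hy hz

theorem restrictScalars_idealSmulTopOfRightMultiples
    (hBa : ∀ (b : B), ∀ x ∈ a, b * (x : B) ∈ idealRightMultiples A a) :
    (idealSmulTopOfRightMultiples a M hBa).restrictScalars A = a • ⊤ :=
  rfl

end RightMultiples

theorem ideal_annihilates_simple_general
    (B : Type*) [Ring B] (A : Subring B) [Module.Finite A B]
    (a : Ideal A)
    (ha_rad : a ≤ (⊥ : Ideal A).jacobson)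
    (hBa : ∀ (b : B), ∀ x ∈ a, b * (x : B) ∈ idealRightMultiples A a) :
    ∀ (M : Type*) [AddCommGroup M] [Module B M], IsSimpleModule B M →
      ∀ x ∈ a, ∀ m : M, (x : B) • m = 0 := by
  intro M _ _ _ x hx m
  have hxm : (x : B) • m ∈ (idealSmulTopOfRightMultiples a M hBa).restrictScalars A := by
    rw [restrictScalars_idealSmulTopOfRightMultiples]
    exact Submodule.smul_mem_smul hx Submodule.mem_top
  rcases eq_bot_or_eq_top (idealSmulTopOfRightMultiples a M hBa) with hbot | htop
  · simpa [hbot] using hxm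
  · have : Nontrivial M := IsSimpleModule.nontrivial B M
    have : Module.Finite B M := Module.IsNoetherian.finite B M
    have : Module.Finite A M := .trans B M
    have hlt : a • (⊤ : Submodule A M) < ⊤ :=
      Submodule.smul_top_lt_top_of_le_jacobson (ha_rad.trans_eq Ideal.jacobson_bot)
    rw [← restrictScalars_idealSmulTopOfRightMultiples hBa, htop,
      Submodule.restrictScalars_top] at hlt
    exact absurd hlt (lt_irrefl _)

/-- Let `A ⊆ B` be rings with `B` finitely generated as a left `A`-module, and let
`𝔞 ⊆ rad A` be a two-sided ideal of `A` with `B𝔞 ⊆ 𝔞B`.  Then `𝔞` annihilates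
every simple left `B`-module. -/
theorem ideal_annihilates_simple
    (B : Type*) [Ring B] (A : Subring B) [Module.Finite A B]
    (a : Ideal A)
    (ha_rad : a ≤ (⊥ : Ideal A).jacobson)
    (ha_twosided : ∀ x ∈ a, ∀ r : A, x * r ∈ a)
    (hBa : ∀ (b : B), ∀ x ∈ a, b * (x : B) ∈ idealRightMultiples A a) :
    ∀ (M : Type*) [AddCommGroup M] [Module B M], IsSimpleModule B M →
      ∀ x ∈ a, ∀ m : M, (x : B) • m = 0 :=
  ideal_annihilates_simple_general B A a ha_rad hBa
end

section
/- Let κ be a field of characteristic p > 0 on which a finite p-group G acts by field automorphisms. Then every simple module over the skew group ring κ⟨G⟩ is one-dimensional over κ with trivial G-action, i.e., isomorphic to κ. -/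
/-!
Since `p = 0` in `κ`, a `κ⟨G⟩`-module is an `𝔽_p`-vector space on which the `p`-group `G`
acts. The `𝔽_p`-span of a `G`-orbit is a finite `G`-set of `p`-power order, so by the
orbit-counting congruence it has a nonzero `G`-fixed vector `m`. Writing `b = Σ a_g g`, we get
`b • m = (Σ a_g) • m`, so `κ⟨G⟩ m = κ m`, and this is all of `M` by simplicity.
-/

/-- `B` is (isomorphic to) the skew group ring `R⟨G⟩` of the action
`σ : G →* RingAut R`: it contains `R` via `ι`, contains `G` as units via `u`,
with the intertwining relation `g · a = σ_g(a) · g`, and is free as a left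
`R`-module with basis `G` (every element has a unique representation
`Σ_g a_g · g`). -/
structure IsSkewGroupRing (R : Type*) [Ring R] (G : Type*) [Group G]
    (σ : G →* RingAut R) (B : Type*) [Ring B] : Type _ where
  ι : R →+* B
  u : G →* Bˣ
  comm : ∀ (g : G) (a : R), (u g : B) * ι a = ι (σ g a) * (u g : B)
  repr : ∀ b : B, ∃! f : G →₀ R, b = f.sum fun g a => ι a * (u g : B)

theorem ZModModule.prime_dvd_natCard {p : ℕ} [Fact p.Prime] {W : Type*} [AddCommGroup W]
    [Module (ZMod p) W] [Finite W] [Nontrivial W] : p ∣ Nat.card W := by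
  obtain ⟨w, hw⟩ := exists_ne (0 : W)
  rw [← addOrderOf_eq_prime (ZModModule.char_nsmul_eq_zero p w) hw]
  exact addOrderOf_dvd_natCard w

theorem IsPGroup.exists_fixed_ne_zero {p : ℕ} [Fact p.Prime] {G : Type*} [Group G] [Finite G]
    (hG : IsPGroup p G) {M : Type*} [AddCommGroup M] [Module (ZMod p) M] [DistribMulAction G M]
    [Nontrivial M] : ∃ m : M, m ≠ 0 ∧ ∀ g : G, g • m = m := by
  obtain ⟨m, hm⟩ := exists_ne (0 : M)
  let W := Submodule.span (ZMod p) (Set.range fun g : G => g • m)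
  have hmW : m ∈ W := Submodule.subset_span ⟨1, one_smul G m⟩
  have : Module.Finite (ZMod p) W := Module.Finite.span_of_finite _ (Set.finite_range _)
  have : Finite W := Module.finite_of_finite (ZMod p)
  have : Nontrivial W := ⟨⟨⟨m, hmW⟩, 0, by simp [hm]⟩⟩
  let V : SubMulAction G M :=
    { carrier := W
      smul_mem' := fun g x hx => by
        let L := (DistribSMul.toAddMonoidHom M g).toZModLinearMap p
        refine Submodule.span_mono ?_ (Submodule.apply_mem_span_image_of_mem_span L hx)
        rintro _ ⟨_, ⟨g', rfl⟩, rfl⟩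
        exact ⟨g * g', mul_smul g g' m⟩ }
  have : Finite V := inferInstanceAs (Finite W)
  obtain ⟨v, hv, hv0⟩ := hG.exists_fixed_point_of_prime_dvd_card_of_fixed_point V
    (ZModModule.prime_dvd_natCard (W := W)) (a := ⟨0, W.zero_mem⟩)
    fun g => Subtype.ext (smul_zero g)
  exact ⟨v, fun h => hv0 (Subtype.ext h.symm), fun g => congrArg Subtype.val (hv g)⟩

theorem IsSkewGroupRing.exists_smul_eq_of_forall_smul_eq {R : Type*} [Ring R] {G : Type*}
    [Group G] {σ : G →* RingAut R} {B : Type*} [Ring B] (h : IsSkewGroupRing R G σ B)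
    {M : Type*} [AddCommGroup M] [Module B M] {m : M} (hm : ∀ g : G, (h.u g : B) • m = m)
    (b : B) : ∃ a : R, b • m = h.ι a • m := by
  obtain ⟨f, rfl, -⟩ := h.repr b
  refine ⟨f.sum fun _ a => a, ?_⟩
  simp only [Finsupp.sum, Finset.sum_smul, map_sum, mul_smul, hm]

/-- Let `κ` be a field of characteristic `p > 0` on which a finite `p`-group `G`
acts by field automorphisms.  Then every simple module over the skew group ring
`κ⟨G⟩` is one-dimensional over `κ` with trivial `G`-action, i.e. isomorphic to `κ`:
it is spanned over `κ` by a nonzero `G`-fixed vector. -/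
theorem simple_module_of_skewGroupRing_pGroup
    (κ : Type*) [Field κ] (p : ℕ) [Fact p.Prime] [CharP κ p]
    (G : Type*) [Group G] [Fintype G] (hG : IsPGroup p G)
    (σ : G →* RingAut κ) (B : Type*) [Ring B]
    (h : IsSkewGroupRing κ G σ B)
    (M : Type*) [AddCommGroup M] [Module B M] (hM : IsSimpleModule B M) :
    ∃ m : M, m ≠ 0 ∧ (∀ g : G, (h.u g : B) • m = m) ∧
      ∀ x : M, ∃ a : κ, x = h.ι a • m := by
  have hpB : (p : B) = 0 := by rw [← map_natCast h.ι, CharP.cast_eq_zero, map_zero]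
  let : Module (ZMod p) M := AddCommGroup.zmodModule fun x : M => by
    rw [← Nat.cast_smul_eq_nsmul B, hpB, zero_smul]
  let : DistribMulAction G M := DistribMulAction.compHom M h.u
  have := IsSimpleModule.nontrivial B M
  obtain ⟨m, hm0, hfix⟩ := hG.exists_fixed_ne_zero (M := M)
  refine ⟨m, hm0, hfix, fun x => ?_⟩
  have hx : x ∈ Submodule.span B {m} := by
    simp [IsSimpleModule.span_singleton_eq_top B hm0]
  obtain ⟨b, rfl⟩ := Submodule.mem_span_singleton.mp hx
  exact h.exists_smul_eq_of_forall_smul_eq hfix b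
end

section
/- Let G be a finite group acting on a commutative k-algebra A, and let H ⊴ G be a normal subgroup. Then the skew Hecke algebra A^H{H\G/H} = End_{A⟨G⟩}(A{G/H})^op is isomorphic as a ring to the skew group ring (A^H)⟨G/H⟩ of the induced action of G/H on the H-invariants A^H. -/
variable {A : Type*} [CommRing A] {G : Type*} [Group G] [MulSemiringAction G A]

/-- The semilinear action of `g ∈ G` on the free `A`-module `A{G/H}` on the coset
space `G/H`: `g • (Σ a_x · xH) = Σ (g • a_x) · (gx)H`. -/
noncomputable def cosetAct (H : Subgroup G) (g : G) (f : (G ⧸ H) →₀ A) :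
    (G ⧸ H) →₀ A :=
  Finsupp.mapDomain (fun x => g • x) (Finsupp.mapRange (fun a => g • a) (smul_zero g) f)

/-- The subring of `H`-invariants `A^H` of `A`. -/
def fixedSubring (H : Subgroup G) : Subring A where
  carrier := {a | ∀ h ∈ H, h • a = a}
  add_mem' := by
    intro a b ha hb h hh
    rw [smul_add, ha h hh, hb h hh]
  mul_mem' := by
    intro a b ha hb h hh
    rw [smul_mul', ha h hh, hb h hh]
  one_mem' := fun h _ => smul_one h
  zero_mem' := fun h _ => smul_zero h
  neg_mem' := by
    intro a ha h hh
    rw [smul_neg, ha h hh]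

lemma cosetAct_add (H : Subgroup G) (g : G) (f₁ f₂ : (G ⧸ H) →₀ A) :
    cosetAct H g (f₁ + f₂) = cosetAct H g f₁ + cosetAct H g f₂ := by
  unfold cosetAct
  rw [Finsupp.mapRange_add (smul_add g), Finsupp.mapDomain_add]

lemma cosetAct_zero (H : Subgroup G) (g : G) :
    cosetAct H g (0 : (G ⧸ H) →₀ A) = 0 := by
  unfold cosetAct
  rw [Finsupp.mapRange_zero, Finsupp.mapDomain_zero]

lemma cosetAct_neg (H : Subgroup G) (g : G) (f : (G ⧸ H) →₀ A) :
    cosetAct H g (-f) = -cosetAct H g f := by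
  have h := cosetAct_add H g f (-f)
  rw [add_neg_cancel, cosetAct_zero] at h
  exact (neg_eq_of_add_eq_zero_right h.symm).symm

/-- The skew Hecke algebra `End_{A⟨G⟩}(A{G/H})`, realised as the subring of
`End_A(A{G/H})` consisting of the endomorphisms commuting with the semilinear
`G`-action. -/
noncomputable def heckeEnd (H : Subgroup G) :
    Subring (Module.End A ((G ⧸ H) →₀ A)) where
  carrier := {φ | ∀ (g : G) (f : (G ⧸ H) →₀ A), φ (cosetAct H g f) = cosetAct H g (φ f)}
  add_mem' := by
    intro φ ψ hφ hψ g f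
    show φ (cosetAct H g f) + ψ (cosetAct H g f) = cosetAct H g (φ f + ψ f)
    rw [hφ g f, hψ g f, cosetAct_add]
  mul_mem' := by
    intro φ ψ hφ hψ g f
    show φ (ψ (cosetAct H g f)) = cosetAct H g (φ (ψ f))
    rw [hψ g f, hφ g (ψ f)]
  one_mem' := fun _ _ => rfl
  zero_mem' := by
    intro g f
    show (0 : (G ⧸ H) →₀ A) = cosetAct H g 0
    rw [cosetAct_zero]
  neg_mem' := by
    intro φ hφ g f
    show -(φ (cosetAct H g f)) = cosetAct H g (-(φ f))
    rw [hφ g f, cosetAct_neg]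


/-!
An `A⟨G⟩`-endomorphism `φ` of `A{G/H}` is determined by `v = φ(1·H)`, since `1·H` generates
`A{G/H}` over `A⟨G⟩`. As `H` fixes the coset `1·H`, it fixes `v`, so `v` has coefficients in
`A^H`. Conversely, for `c ∈ A^H` the map `a · xH ↦ a τ_x(c) · xyH` is equivariant and sends
`1·H` to `c · yH`; here `τ_x(c) = g • c` for any `g ∈ x`, well defined because `c` is
`H`-fixed. Composing two such maps (in the opposite order) gives
`(c · y)(c' · y') = c τ_y(c') · yy'`, the multiplication of `(A^H)⟨G/H⟩`.
-/

open Finsupp MulOpposite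

lemma Finsupp.exists_mapRange_val_eq {α M S : Type*} [Zero M] [SetLike S M] [ZeroMemClass S M]
    {s : S} (v : α →₀ M) (hv : ∀ x, v x ∈ s) :
    ∃ F : α →₀ s, F.mapRange Subtype.val rfl = v :=
  ⟨ofSupportFinite (fun x => ⟨v x, hv x⟩)
      (v.hasFiniteSupport.subset fun _ hx h0 => hx (Subtype.ext h0)),
    ext fun x => by rw [mapRange_apply, ofSupportFinite_coe]⟩

lemma smul_quotient_eq_mk_mul (H : Subgroup G) [H.Normal] (g : G) (x : G ⧸ H) :
    g • x = (g : G ⧸ H) * x := by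
  induction x using QuotientGroup.induction_on with
  | H a => rw [MulAction.Quotient.smul_mk, smul_eq_mul, QuotientGroup.mk_mul]

lemma cosetAct_single (H : Subgroup G) (g : G) (x : G ⧸ H) (a : A) :
    cosetAct H g (single x a) = single (g • x) (g • a) := by
  rw [cosetAct, mapRange_single, mapDomain_single]

lemma cosetAct_apply_smul (H : Subgroup G) (g : G) (f : (G ⧸ H) →₀ A) (x : G ⧸ H) :
    cosetAct H g f (g • x) = g • f x := by
  rw [cosetAct, mapDomain_apply (MulAction.injective g), mapRange_apply]

namespace fixedSubring

variable (H : Subgroup G) [H.Normal]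

lemma smul_mem (g : G) {a : A} (ha : a ∈ fixedSubring H) : g • a ∈ fixedSubring H := by
  intro h hh
  have hconj : g⁻¹ * h * g ∈ H := by simpa using ‹H.Normal›.conj_mem h hh g⁻¹
  rw [← mul_smul, show h * g = g * (g⁻¹ * h * g) by group, mul_smul, ha _ hconj]

def ringAut : G →* RingAut (fixedSubring (A := A) H) where
  toFun g :=
    { toFun := fun a => ⟨g • (a : A), smul_mem H g a.2⟩
      invFun := fun a => ⟨g⁻¹ • (a : A), smul_mem H g⁻¹ a.2⟩
      left_inv := fun a => Subtype.ext (inv_smul_smul g (a : A))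
      right_inv := fun a => Subtype.ext (smul_inv_smul g (a : A))
      map_mul' := fun a b => Subtype.ext (smul_mul' g (a : A) b)
      map_add' := fun a b => Subtype.ext (smul_add g (a : A) b) }
  map_one' := RingEquiv.ext fun a => Subtype.ext (one_smul G (a : A))
  map_mul' g g' := RingEquiv.ext fun a => Subtype.ext (mul_smul g g' (a : A))

def quotientRingAut : G ⧸ H →* RingAut (fixedSubring (A := A) H) :=
  QuotientGroup.lift H (ringAut H) fun h hh => RingEquiv.ext fun a => Subtype.ext (a.2 h hh)

lemma coe_quotientRingAut_mk_apply (g : G) (a : fixedSubring (A := A) H) :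
    (quotientRingAut H g a : A) = g • (a : A) := rfl

end fixedSubring

namespace heckeEnd

open fixedSubring

variable {H : Subgroup G} [H.Normal]

noncomputable def singleLinear (y : G ⧸ H) (c : fixedSubring (A := A) H) :
    Module.End A ((G ⧸ H) →₀ A) :=
  linearCombination A fun x => single (x * y) (quotientRingAut H x c : A)

lemma singleLinear_single (y : G ⧸ H) (c : fixedSubring (A := A) H) (x : G ⧸ H) (a : A) :
    singleLinear y c (single x a) = single (x * y) (a * quotientRingAut H x c) := by
  rw [singleLinear, linearCombination_single, smul_single, smul_eq_mul]

lemma singleLinear_mem (y : G ⧸ H) (c : fixedSubring (A := A) H) :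
    singleLinear y c ∈ heckeEnd (A := A) H := by
  intro g w
  induction w using Finsupp.induction_linear with
  | zero => rw [cosetAct_zero, map_zero, cosetAct_zero]
  | add w₁ w₂ h₁ h₂ => rw [cosetAct_add, map_add, map_add, h₁, h₂, cosetAct_add]
  | single x a =>
    have hτ : (quotientRingAut H (g • x) c : A) = g • (quotientRingAut H x c : A) := by
      rw [smul_quotient_eq_mk_mul, map_mul, RingAut.mul_apply, coe_quotientRingAut_mk_apply]
    rw [cosetAct_single, singleLinear_single, singleLinear_single, cosetAct_single,
      smul_mul', hτ, smul_quotient_eq_mk_mul, smul_quotient_eq_mk_mul, mul_assoc]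

/-- The element `c · yH` of the skew group ring `(A^H)⟨G/H⟩`, inside `heckeEndᵐᵒᵖ`. -/
noncomputable def skewSingle (y : G ⧸ H) (c : fixedSubring (A := A) H) :
    (heckeEnd (A := A) H)ᵐᵒᵖ :=
  op ⟨singleLinear y c, singleLinear_mem y c⟩

variable (H) in
noncomputable def eval : (heckeEnd (A := A) H)ᵐᵒᵖ →+ (G ⧸ H) →₀ A where
  toFun b := (unop b).1 (single 1 1)
  map_zero' := rfl
  map_add' _ _ := rfl

lemma apply_single_mk (φ : heckeEnd (A := A) H) (g : G) (a : A) :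
    φ.1 (single g a) = a • cosetAct H g (φ.1 (single 1 1)) := by
  have hsingle : single (g : G ⧸ H) a = a • cosetAct H g (single 1 1) := by
    rw [cosetAct_single, smul_quotient_eq_mk_mul, mul_one, smul_one, smul_single, smul_eq_mul,
      mul_one]
  rw [hsingle, map_smul, φ.2 g]

lemma eval_injective : Function.Injective (eval (A := A) H) := by
  intro b b' hb
  refine unop_injective (Subtype.ext (lhom_ext fun x a => ?_))
  rw [← QuotientGroup.out_eq' x, apply_single_mk, apply_single_mk]
  exact congrArg _ (congrArg _ hb)

lemma eval_apply_mem (b : (heckeEnd (A := A) H)ᵐᵒᵖ) (x : G ⧸ H) :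
    eval H b x ∈ fixedSubring H := by
  intro h hh
  have hx : h • x = x := by
    rw [smul_quotient_eq_mk_mul, (QuotientGroup.eq_one_iff h).2 hh, one_mul]
  have hb : cosetAct H h (eval H b) = eval H b := by
    have he : cosetAct H h (single (1 : G ⧸ H) (1 : A)) = single 1 1 := by
      rw [cosetAct_single, smul_one, smul_quotient_eq_mk_mul, mul_one,
        (QuotientGroup.eq_one_iff h).2 hh]
    exact ((unop b).2 h _).symm.trans (congrArg (unop b).1 he)
  rw [← cosetAct_apply_smul, hx, hb]

lemma eval_skewSingle (y : G ⧸ H) (c : fixedSubring (A := A) H) :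
    eval H (skewSingle y c) = single y (c : A) := by
  show singleLinear y c (single 1 1) = _
  rw [singleLinear_single, one_mul, one_mul, map_one, RingAut.one_apply]

lemma skewSingle_mul_skewSingle (y y' : G ⧸ H) (c c' : fixedSubring (A := A) H) :
    skewSingle y c * skewSingle y' c' = skewSingle (y * y') (c * quotientRingAut H y c') := by
  refine eval_injective ?_
  show singleLinear y' c' (singleLinear y c (single 1 1)) = _
  rw [eval_skewSingle, singleLinear_single, singleLinear_single, one_mul, one_mul, map_one,
    RingAut.one_apply, Subring.coe_mul]

lemma eval_sum_skewSingle (F : G ⧸ H →₀ fixedSubring (A := A) H) :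
    eval H (F.sum skewSingle) = F.mapRange Subtype.val rfl := by
  rw [map_finsuppSum, ← sum_single (F.mapRange _ _), sum_mapRange_index fun _ => single_zero _]
  exact sum_congr fun y _ => eval_skewSingle y (F y)

lemma existsUnique_eq_sum_skewSingle (b : (heckeEnd (A := A) H)ᵐᵒᵖ) :
    ∃! F : G ⧸ H →₀ fixedSubring (A := A) H, b = F.sum skewSingle := by
  have hiff : ∀ F : G ⧸ H →₀ fixedSubring (A := A) H,
      b = F.sum skewSingle ↔ F.mapRange Subtype.val rfl = eval H b := fun F => by
    rw [← eval_sum_skewSingle, eval_injective.eq_iff, eq_comm]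
  obtain ⟨F, hF⟩ := exists_mapRange_val_eq (eval H b) (eval_apply_mem b)
  refine ⟨F, (hiff F).2 hF, fun F' hF' => ?_⟩
  exact mapRange_injective _ rfl Subtype.val_injective (((hiff F').1 hF').trans hF.symm)

variable (H) in
noncomputable def ofFixedSubring :
    fixedSubring (A := A) H →+* (heckeEnd (A := A) H)ᵐᵒᵖ where
  toFun c := skewSingle 1 c
  map_one' := eval_injective (eval_skewSingle 1 1)
  map_mul' c c' := by rw [skewSingle_mul_skewSingle, mul_one, map_one, RingAut.one_apply]
  map_zero' := eval_injective (by
    rw [eval_skewSingle, map_zero, ZeroMemClass.coe_zero, single_zero])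
  map_add' c c' := eval_injective (by
    rw [map_add, eval_skewSingle, eval_skewSingle, eval_skewSingle, Subring.coe_add, single_add])

variable (H) in
noncomputable def cosetUnit : G ⧸ H →* ((heckeEnd (A := A) H)ᵐᵒᵖ)ˣ :=
  MonoidHom.toHomUnits
    { toFun := fun y => skewSingle y 1
      map_one' := (ofFixedSubring H).map_one
      map_mul' := fun y y' => by rw [skewSingle_mul_skewSingle, map_one, one_mul] }

lemma ofFixedSubring_apply (c : fixedSubring (A := A) H) :
    ofFixedSubring H c = skewSingle 1 c :=
  rfl

lemma coe_cosetUnit (y : G ⧸ H) :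
    (cosetUnit (A := A) H y : (heckeEnd (A := A) H)ᵐᵒᵖ) = skewSingle y 1 :=
  rfl

lemma ofFixedSubring_mul_cosetUnit (y : G ⧸ H) (c : fixedSubring (A := A) H) :
    ofFixedSubring H c * (cosetUnit (A := A) H y : (heckeEnd (A := A) H)ᵐᵒᵖ) =
      skewSingle y c := by
  simp only [ofFixedSubring_apply, coe_cosetUnit, skewSingle_mul_skewSingle, one_mul, map_one,
    mul_one]

variable (H) in
noncomputable def isSkewGroupRing :
    IsSkewGroupRing (fixedSubring (A := A) H) (G ⧸ H) (quotientRingAut H)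
      (heckeEnd (A := A) H)ᵐᵒᵖ where
  ι := ofFixedSubring H
  u := cosetUnit H
  comm y c := by
    simp only [ofFixedSubring_apply, coe_cosetUnit, skewSingle_mul_skewSingle, map_one, mul_one,
      one_mul]
  repr b := by simpa only [ofFixedSubring_mul_cosetUnit] using existsUnique_eq_sum_skewSingle b

end heckeEnd

theorem heckeEnd_isSkewGroupRing_general
    (H : Subgroup G) [H.Normal] :
    ∃ τ : (G ⧸ H) →* RingAut (fixedSubring (A := A) H),
      (∀ (g : G) (a : fixedSubring (A := A) H),
          ((τ (g : G ⧸ H) a : fixedSubring (A := A) H) : A) = g • (a : A)) ∧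
      Nonempty (IsSkewGroupRing (fixedSubring (A := A) H) (G ⧸ H) τ
        ((heckeEnd (A := A) H)ᵐᵒᵖ)) :=
  ⟨fixedSubring.quotientRingAut H, fixedSubring.coe_quotientRingAut_mk_apply H,
    ⟨heckeEnd.isSkewGroupRing H⟩⟩

/-- Let `G` be a finite group acting on a commutative `k`-algebra `A` (by
`k`-algebra automorphisms), and let `H ⊴ G` be a normal subgroup.  Then the skew
Hecke algebra `A^H{H\G/H} = End_{A⟨G⟩}(A{G/H})ᵒᵖ` is isomorphic as a ring to the
skew group ring `(A^H)⟨G/H⟩` of the induced action of `G/H` on the `H`-invariants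
`A^H`. -/
theorem heckeEnd_isSkewGroupRing
    (k : Type*) [CommRing k] [Algebra k A]
    [Finite G]
    (halg : ∀ (g : G) (c : k), g • (algebraMap k A c) = algebraMap k A c)
    (H : Subgroup G) [H.Normal] :
    ∃ τ : (G ⧸ H) →* RingAut (fixedSubring (A := A) H),
      (∀ (g : G) (a : fixedSubring (A := A) H),
          ((τ (g : G ⧸ H) a : fixedSubring (A := A) H) : A) = g • (a : A)) ∧
      Nonempty (IsSkewGroupRing (fixedSubring (A := A) H) (G ⧸ H) τ
        ((heckeEnd (A := A) H)ᵐᵒᵖ)) :=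
  heckeEnd_isSkewGroupRing_general H
end
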